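/- Let g be holomorphic on an open set containing the closed disk D(z_0, ρ) and let M̃ = max{|g(z)| : |z − z_0| = ρ}. Then for any 0 < δ < ρ and any z with |z − z_0| < δ, one has |g(z) − g(z_0)| ≤ δ |g′(z_0)| + δ² · M̃ / (ρ (ρ − δ)). -/

import Mathlib

/-!
Expand `g` in its Cauchy power series at `z₀`. The Cauchy estimates bound the `n`-th coefficient
by `M / ρ ^ n`, so beyond the linear term the series at `z - z₀` is dominated by the geometric
series `M ∑_{n ≥ 2} (δ / ρ) ^ n = δ² M / (ρ (ρ - δ))`.
-/

open Metric

theorem norm_cauchyPowerSeries_le_of_forall_mem_sphere {E : Type*} [NormedAddCommGroup E]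
    [NormedSpace ℂ E] {f : ℂ → E} {c : ℂ} {R M : ℝ} (hf : ContinuousOn f (sphere c |R|))
    (hM : ∀ w ∈ sphere c |R|, ‖f w‖ ≤ M) (n : ℕ) :
    ‖cauchyPowerSeries f c R n‖ ≤ M * |R|⁻¹ ^ n := by
  refine (norm_cauchyPowerSeries_le f c R n).trans ?_
  gcongr
  exact Real.circleAverage_mono_on_of_le_circle hf.norm.circleIntegrable' hM

section

variable {𝕜 E F : Type*} [NontriviallyNormedField 𝕜] [NormedAddCommGroup E] [NormedSpace 𝕜 E]
  [NormedAddCommGroup F] [NormedSpace 𝕜 F]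

theorem HasFPowerSeriesOnBall.norm_sub_partialSum_le {f : E → F}
    {p : FormalMultilinearSeries 𝕜 E F} {x y : E} {r : ENNReal} {M R δ : ℝ}
    (hf : HasFPowerSeriesOnBall f p x r) (hy : y ∈ eball 0 r)
    (hp : ∀ n, ‖p n‖ ≤ M * R⁻¹ ^ n) (hyδ : ‖y‖ ≤ δ) (hδR : δ < R) (k : ℕ) :
    ‖f (x + y) - p.partialSum k y‖ ≤ M * (δ / R) ^ k * (1 - δ / R)⁻¹ := by
  have hδ : 0 ≤ δ := (norm_nonneg y).trans hyδ
  have hR : 0 < R := hδ.trans_lt hδR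
  have hM : 0 ≤ M := by simpa using (norm_nonneg _).trans (hp 0)
  have htail : HasSum (fun n ↦ p (n + k) fun _ ↦ y) (f (x + y) - p.partialSum k y) :=
    (hasSum_nat_add_iff' k).mpr (hf.hasSum hy)
  have hgeom : HasSum (fun n ↦ M * (δ / R) ^ (n + k)) (M * (δ / R) ^ k * (1 - δ / R)⁻¹) := by
    simpa only [pow_add, mul_comm, mul_assoc, mul_left_comm] using
      (hasSum_geometric_of_lt_one (by positivity) ((div_lt_one hR).2 hδR)).mul_left
        (M * (δ / R) ^ k)
  refine htail.norm_le_of_bounded hgeom fun n ↦ ?_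
  calc ‖p (n + k) fun _ ↦ y‖ ≤ ‖p (n + k)‖ * ‖y‖ ^ (n + k) := by
        simpa using (p (n + k)).le_opNorm fun _ ↦ y
    _ ≤ M * R⁻¹ ^ (n + k) * δ ^ (n + k) := by
        gcongr
        exact hp _
    _ = M * (δ / R) ^ (n + k) := by rw [div_pow]; ring

end

theorem HasFPowerSeriesAt.partialSum_two_eq {𝕜 E : Type*} [NontriviallyNormedField 𝕜]
    [NormedAddCommGroup E] [NormedSpace 𝕜 E] {f : 𝕜 → E} {p : FormalMultilinearSeries 𝕜 𝕜 E}
    {x : 𝕜} (hf : HasFPowerSeriesAt f p x) (y : 𝕜) :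
    p.partialSum 2 y = f x + y • deriv f x := by
  rw [FormalMultilinearSeries.partialSum, Finset.sum_range_succ, Finset.sum_range_one,
    hf.coeff_zero, FormalMultilinearSeries.apply_eq_pow_smul_coeff, pow_one, hf.deriv]
  rfl

theorem variation_bound_general (U : Set ℂ) (g : ℂ → ℂ)
    (hg : DifferentiableOn ℂ g U) (z₀ : ℂ) (ρ : ℝ) (hρ : 0 < ρ)
    (hball : Metric.closedBall z₀ ρ ⊆ U)
    (M : ℝ)
    (hM : IsGreatest {x : ℝ | ∃ z : ℂ, ‖z - z₀‖ = ρ ∧ x = ‖g z‖} M)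
    (δ : ℝ) (hδρ : δ < ρ) :
    ∀ z : ℂ, ‖z - z₀‖ < δ →
      ‖g z - g z₀‖ ≤
        δ * ‖deriv g z₀‖ + δ ^ 2 * (M / (ρ * (ρ - δ))) := by
  intro z hz
  lift ρ to NNReal using hρ.le
  have hp := (hg.mono hball).hasFPowerSeriesOnBall (NNReal.coe_pos.mp hρ)
  have hM_sphere : ∀ w ∈ sphere z₀ |(ρ : ℝ)|, ‖g w‖ ≤ M := fun w hw ↦
    hM.2 ⟨w, by simpa [dist_eq_norm] using hw, rfl⟩
  have hcoeff := norm_cauchyPowerSeries_le_of_forall_mem_sphere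
    ((hg.mono hball).continuousOn.mono (by simpa using sphere_subset_closedBall)) hM_sphere
  rw [NNReal.abs_eq] at hcoeff
  have hz_ball : z - z₀ ∈ eball 0 ρ := by
    simpa [edist_dist, dist_eq_norm, ENNReal.ofReal_lt_coe_iff] using hz.trans hδρ
  have htail := hp.norm_sub_partialSum_le hz_ball hcoeff hz.le hδρ 2
  rw [add_sub_cancel, hp.hasFPowerSeriesAt.partialSum_two_eq, ← sub_sub] at htail
  calc ‖g z - g z₀‖ ≤ ‖(z - z₀) • deriv g z₀‖ + ‖g z - g z₀ - (z - z₀) • deriv g z₀‖ :=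
        norm_le_norm_add_norm_sub' _ _
    _ ≤ δ * ‖deriv g z₀‖ + M * (δ / ρ) ^ 2 * (1 - δ / ρ)⁻¹ := by
        rw [norm_smul]; gcongr
    _ = δ * ‖deriv g z₀‖ + δ ^ 2 * (M / (ρ * (ρ - δ))) := by
        have hρδ : (ρ : ℝ) - δ ≠ 0 := by linarith
        field_simp

/-- Variation bound on a disk: if g is holomorphic on a neighbourhood of the closed
disk D(z₀, ρ) and M is the maximum of |g| on the boundary circle, then for 0 < δ < ρ
and |z − z₀| < δ one has |g(z) − g(z₀)| ≤ δ|g′(z₀)| + δ²·M/(ρ(ρ − δ)). -/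
theorem variation_bound (U : Set ℂ) (hU : IsOpen U) (g : ℂ → ℂ)
    (hg : DifferentiableOn ℂ g U) (z₀ : ℂ) (ρ : ℝ) (hρ : 0 < ρ)
    (hball : Metric.closedBall z₀ ρ ⊆ U)
    (M : ℝ)
    (hM : IsGreatest {x : ℝ | ∃ z : ℂ, ‖z - z₀‖ = ρ ∧ x = ‖g z‖} M)
    (δ : ℝ) (hδ0 : 0 < δ) (hδρ : δ < ρ) :
    ∀ z : ℂ, ‖z - z₀‖ < δ →
      ‖g z - g z₀‖ ≤
        δ * ‖deriv g z₀‖ + δ ^ 2 * (M / (ρ * (ρ - δ))) :=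
  variation_bound_general U g hg z₀ ρ hρ hball M hM δ hδρ
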